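/- Let X be a Banach lattice such that the quotient Banach lattice X/X_a has order continuous dual (X/X_a)*. Then X has the disjoint order continuity property: every norm bounded disjoint sequence (f_n) in X₊ with f_n → 0 in σ(X, X_n^~) converges weakly to 0. -/

import Mathlib

/-!
Dominate `g ∈ X*` on the positive cone by a positive functional `φ`, and let `φₐ` be the
component of `φ` carried by `X_a`, `φₐ x = sup {φ y | y ∈ X_a, 0 ≤ y ≤ x}` for `x ≥ 0`. Since the
elements of `X_a` have order continuous norm, `φₐ` is order continuous, so `φₐ (f n) → 0`.
Writing `v = v ⊓ |y| + (v - |y|)⁺` for any `y` with `q y = q v` gives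
`φ v ≤ φₐ v + ‖φ‖ ‖q v‖` for `v ≥ 0`. As `(X/X_a)*` is order continuous, the disjoint sequence
`q (f n)` is weakly null, so by Hahn–Banach `0` is in the norm closure of the convex hull of
every subsequence of it. If `φ (f n) ≥ ε` infinitely often, a convex combination `v` of those
`f n` would then have `φ v ≥ ε`, `φₐ v ≤ ε / 2` and `‖q v‖` arbitrarily small. Hence
`φ (f n) → 0`, and so `g (f n) → 0`.
-/

open Filter Topology Pointwise

noncomputable section

/-- A directed index type for nets. -/
structure DirectedType : Type 1 where
  ι : Type
  r : ι → ι → Prop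
  nonempty : Nonempty ι
  refl : ∀ a, r a a
  trans : ∀ a b c, r a b → r b c → r a c
  directed : ∀ a b, ∃ c, r a c ∧ r b c

/-- The natural numbers as a directed type (for sequences). -/
def natDir : DirectedType where
  ι := ℕ
  r := (· ≤ ·)
  nonempty := ⟨0⟩
  refl := fun _ => le_refl _
  trans := fun _ _ _ => le_trans
  directed := fun a b => ⟨max a b, le_max_left _ _, le_max_right _ _⟩

/-- A real valued net tends to zero. -/
def NetTendstoZero (D : DirectedType) (u : D.ι → ℝ) : Prop :=
  ∀ ε : ℝ, 0 < ε → ∃ i₀, ∀ i, D.r i₀ i → |u i| < ε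

variable {X : Type*} [NormedAddCommGroup X] [Lattice X] [HasSolidNorm X] [IsOrderedAddMonoid X]
    [NormedSpace ℝ X]

/-- Order convergence of a net: there is a decreasing net `h` with infimum `0`
dominating `|f i - x|` eventually. -/
def OrderConvNet (D : DirectedType) (f : D.ι → X) (x : X) : Prop :=
  ∃ (E : DirectedType) (h : E.ι → X),
    (∀ γ₁ γ₂, E.r γ₁ γ₂ → h γ₂ ≤ h γ₁) ∧ IsGLB (Set.range h) 0 ∧
      ∀ γ, ∃ i₀, ∀ i, D.r i₀ i → |f i - x| ≤ h γ

/-- The order closure of a set: all limits of order convergent nets from the set. -/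
def OrderClosure (C : Set X) : Set X :=
  {x | ∃ (D : DirectedType) (f : D.ι → X), (∀ i, f i ∈ C) ∧ OrderConvNet D f x}

/-- A set is order closed if it contains all order limits of nets from it. -/
def IsOrderClosed (C : Set X) : Prop := OrderClosure C ⊆ C

/-- Unbounded order convergence of a net. -/
def UOConvNet (D : DirectedType) (f : D.ι → X) (x : X) : Prop :=
  ∀ h : X, 0 ≤ h → OrderConvNet D (fun i => |f i - x| ⊓ h) 0

/-- Membership in the order continuous dual `X_n^~`. -/
def InOCDual (g : X →L[ℝ] ℝ) : Prop :=
  ∀ (D : DirectedType) (f : D.ι → X), OrderConvNet D f 0 →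
    NetTendstoZero D fun i => g (f i)

/-- Membership in the unbounded order continuous dual `X_uo^~`. -/
def InUODual (g : X →L[ℝ] ℝ) : Prop :=
  ∀ (D : DirectedType) (f : D.ι → X), (∃ M, ∀ i, ‖f i‖ ≤ M) → UOConvNet D f 0 →
    NetTendstoZero D fun i => g (f i)

/-- Convergence of a net in the topology `σ(X, X_n^~)`. -/
def SigmaNConvNet (D : DirectedType) (f : D.ι → X) (x : X) : Prop :=
  ∀ g : X →L[ℝ] ℝ, InOCDual g → NetTendstoZero D fun i => g (f i) - g x

/-- Convergence of a net in the topology `σ(X, X_uo^~)`. -/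
def SigmaUOConvNet (D : DirectedType) (f : D.ι → X) (x : X) : Prop :=
  ∀ g : X →L[ℝ] ℝ, InUODual g → NetTendstoZero D fun i => g (f i) - g x

/-- A set is `σ(X, X_n^~)`-closed. -/
def IsSigmaNClosed (C : Set X) : Prop :=
  ∀ (D : DirectedType) (f : D.ι → X), (∀ i, f i ∈ C) →
    ∀ x, SigmaNConvNet D f x → x ∈ C

/-- A set is `σ(X, X_uo^~)`-closed. -/
def IsSigmaUOClosed (C : Set X) : Prop :=
  ∀ (D : DirectedType) (f : D.ι → X), (∀ i, f i ∈ C) →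
    ∀ x, SigmaUOConvNet D f x → x ∈ C

/-- The `σ(X, X_n^~)`-closure of a set. -/
def SigmaNClosure (C : Set X) : Set X :=
  {x | ∃ (D : DirectedType) (f : D.ι → X), (∀ i, f i ∈ C) ∧ SigmaNConvNet D f x}

/-- The `|σ|(X, X_n^~)`-sequential closure of a set. -/
def AbsSigmaSeqClosure (C : Set X) : Set X :=
  {x | ∃ s : ℕ → X, (∀ n, s n ∈ C) ∧
    ∀ g : X →L[ℝ] ℝ, InOCDual g → Tendsto (fun n => g (|s n - x|)) atTop (𝓝 0)}

/-- A set is `|σ|(X, X_n^~)`-sequentially closed. -/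
def IsAbsSigmaSeqClosed (C : Set X) : Prop := AbsSigmaSeqClosure C ⊆ C

/-- The order on the dual: `g ≤ h` iff `g x ≤ h x` on the positive cone. -/
def dualLE (g h : X →L[ℝ] ℝ) : Prop := ∀ x : X, 0 ≤ x → g x ≤ h x

/-- Order continuity of the norm on a subset `S` of the dual: every net in `S`
decreasing to `0` (infimum `0` among lower bounds from `S`) converges to `0` in
the operator norm. -/
def DualOCOn (S : Set (X →L[ℝ] ℝ)) : Prop :=
  ∀ (D : DirectedType) (f : D.ι → (X →L[ℝ] ℝ)), (∀ i, f i ∈ S) →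
    (∀ i j, D.r i j → dualLE (f j) (f i)) → (∀ i, dualLE 0 (f i)) →
    (∀ h ∈ S, (∀ i, dualLE h (f i)) → dualLE h 0) →
    NetTendstoZero D fun i => ‖f i‖

/-- A sequence is weakly null. -/
def WeaklyNull (f : ℕ → X) : Prop :=
  ∀ g : X →L[ℝ] ℝ, Tendsto (fun n => g (f n)) atTop (𝓝 0)

/-- The sequence satisfies a lower `ℓ¹`-estimate, i.e. it is equivalent to the
unit vector basis of `ℓ¹`. -/
def IsL1Basic (f : ℕ → X) : Prop :=
  ∃ M : ℝ, 0 < M ∧ ∀ (m : ℕ) (a : ℕ → ℝ),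
    (1 / M) * ∑ k ∈ Finset.range m, |a k| ≤ ‖∑ k ∈ Finset.range m, a k • f k‖

variable (X)

/-- Order continuity of the norm of `X`. -/
def OCNorm : Prop :=
  ∀ (D : DirectedType) (f : D.ι → X), (∀ i j, D.r i j → f j ≤ f i) →
    IsGLB (Set.range f) 0 → NetTendstoZero D fun i => ‖f i‖

/-- The order continuous dual as a set of continuous linear functionals. -/
def OCDual : Set (X →L[ℝ] ℝ) := {g | InOCDual g}

/-- The norm dual `X*` is order continuous. -/
def DualOrderContinuous : Prop := DualOCOn (Set.univ : Set (X →L[ℝ] ℝ))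

/-- The order continuous dual `X_n^~` is order continuous. -/
def OCDualOrderContinuous : Prop := DualOCOn (OCDual X)

/-- `X` is monotonically complete. -/
def MonotonicallyComplete : Prop :=
  ∀ (D : DirectedType) (f : D.ι → X), (∀ i j, D.r i j → f i ≤ f j) →
    (∃ M, ∀ i, ‖f i‖ ≤ M) → ∃ s, IsLUB (Set.range f) s

/-- `X` is Dedekind complete. -/
def DedekindComplete : Prop :=
  ∀ S : Set X, S.Nonempty → BddAbove S → ∃ s, IsLUB S s

/-- `X` is σ-Dedekind complete. -/
def SigmaDedekindComplete : Prop :=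
  ∀ f : ℕ → X, BddAbove (Set.range f) → ∃ s, IsLUB (Set.range f) s

/-- `X` has the weak Fatou property. -/
def WeakFatou : Prop :=
  ∃ r : ℝ, 0 < r ∧ ∀ (D : DirectedType) (f : D.ι → X),
    (∀ i j, D.r i j → f i ≤ f j) → ∀ s, IsLUB (Set.range f) s →
    ∀ M : ℝ, (∀ i, ‖f i‖ ≤ M) → ‖s‖ ≤ r * M

/-- `X_n^~` separates the points of `X`. -/
def OCDualSeparatesPoints : Prop :=
  ∀ x : X, x ≠ 0 → ∃ g : X →L[ℝ] ℝ, InOCDual g ∧ g x ≠ 0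

/-- `X_n^~` contains a strictly positive element. -/
def HasStrictlyPositiveOCFunctional : Prop :=
  ∃ g : X →L[ℝ] ℝ, InOCDual g ∧ ∀ x : X, x ≠ 0 → 0 < g (|x|)

/-- The unit ball `B` determined by `X_n^~`. -/
def KSBall : Set X :=
  {x | ∀ g : X →L[ℝ] ℝ, InOCDual g → dualLE 0 g → ‖g‖ ≤ 1 → g (|x|) ≤ 1}

/-- `σ(X, X_n^~)` has the Krein–Smulian property. -/
def KreinSmulianProperty : Prop :=
  ∀ C : Set X, Convex ℝ C →
    (∀ k : ℕ, IsSigmaNClosed (C ∩ (k : ℝ) • KSBall X)) → IsSigmaNClosed C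

/-- Property `P1`: every order closed convex set is `σ(X, X_n^~)`-closed. -/
def PropP1 : Prop := ∀ C : Set X, Convex ℝ C → IsOrderClosed C → IsSigmaNClosed C

/-- Property `P4`: every norm bounded order closed convex set is
`|σ|(X, X_n^~)`-sequentially closed. -/
def PropP4 : Prop :=
  ∀ C : Set X, Convex ℝ C → (∃ M, ∀ x ∈ C, ‖x‖ ≤ M) → IsOrderClosed C →
    IsAbsSigmaSeqClosed C

/-- The disjoint order continuity property. -/
def DOCP : Prop :=
  ∀ f : ℕ → X, (∀ n, 0 ≤ f n) → (∃ M, ∀ n, ‖f n‖ ≤ M) →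
    (∀ n m, n ≠ m → f n ⊓ f m = 0) →
    (∀ g : X →L[ℝ] ℝ, InOCDual g → Tendsto (fun n => g (f n)) atTop (𝓝 0)) →
    WeaklyNull f

/-- The order continuous part `X_a` of `X`. -/
def OrderContPart : Set X :=
  {f | ∀ (D : DirectedType) (g : D.ι → X), (∀ i, |g i| ≤ |f|) →
    OrderConvNet D g 0 → NetTendstoZero D fun i => ‖g i‖}

/-- The order subsequence splitting property. -/
def OSSP : Prop :=
  ∀ f : ℕ → X, (∀ n, 0 ≤ f n) → (∃ M, ∀ n, ‖f n‖ ≤ M) → UOConvNet natDir f 0 →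
    ∃ φ : ℕ → ℕ, StrictMono φ ∧ ∃ x y z : ℕ → X,
      (∀ k, f (φ k) = x k + y k + z k) ∧
      (∀ k, 0 ≤ x k) ∧ (∀ k, 0 ≤ y k) ∧ (∀ k, 0 ≤ z k) ∧
      (∀ k, x k ∈ OrderContPart X) ∧
      (∀ k l, k ≠ l → y k ⊓ y l = 0) ∧
      (∃ b, ∀ k, z k ≤ b)

variable {X}

section LatticeGroup

variable {α : Type*} [Lattice α] [AddCommGroup α] [IsOrderedAddMonoid α]

lemma inf_add_posPart_sub (a b : α) : a ⊓ b + (a - b)⁺ = a := by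
  rw [inf_eq_sub_posPart_sub, sub_add_cancel]

lemma posPart_le_abs (a : α) : a⁺ ≤ |a| := sup_le (le_abs_self a) (abs_nonneg a)

lemma negPart_le_abs (a : α) : a⁻ ≤ |a| := sup_le (neg_le_abs a) (abs_nonneg a)

lemma inf_add_le_add_inf {a b c : α} (ha : 0 ≤ a) (hb : 0 ≤ b) (hc : 0 ≤ c) :
    (a + b) ⊓ c ≤ a ⊓ c + b ⊓ c := by
  rw [← sub_le_iff_le_add', sub_inf]
  refine sup_le (le_inf ?_ ?_) (le_inf ?_ ?_)
  · exact sub_le_iff_le_add'.2 inf_le_left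
  · exact (sub_le_self _ ha).trans inf_le_right
  · exact (sub_nonpos.2 inf_le_right).trans hb
  · exact (sub_nonpos.2 inf_le_right).trans hc

end LatticeGroup

section NormedLattice

variable {E : Type*} [NormedAddCommGroup E] [Lattice E] [HasSolidNorm E] [IsOrderedAddMonoid E]

lemma norm_le_norm_of_nonneg_of_le {a b : E} (ha : 0 ≤ a) (hab : a ≤ b) : ‖a‖ ≤ ‖b‖ :=
  norm_le_norm_of_abs_le_abs (by rwa [abs_of_nonneg ha, abs_of_nonneg (ha.trans hab)])

lemma norm_posPart_le (a : E) : ‖a⁺‖ ≤ ‖a‖ := by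
  simpa only [norm_abs_eq_norm] using
    norm_le_norm_of_nonneg_of_le (posPart_nonneg a) (posPart_le_abs a)

lemma norm_negPart_le (a : E) : ‖a⁻‖ ≤ ‖a‖ := by
  simpa only [norm_abs_eq_norm] using
    norm_le_norm_of_nonneg_of_le (negPart_nonneg a) (negPart_le_abs a)

variable [NormedSpace ℝ E]

/-- No compatibility between the order and the scalar action is assumed, so this is derived from
`0 ≤ 2 • a → 0 ≤ a`, dyadic approximation and closedness of the positive cone. -/
lemma real_smul_nonneg {c : ℝ} {x : E} (hc : 0 ≤ c) (hx : 0 ≤ x) : 0 ≤ c • x := by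
  have halve : ∀ (k : ℕ) (y : E), 0 ≤ (2 : ℝ) ^ k • y → 0 ≤ y := by
    intro k
    induction k with
    | zero => simp
    | succ k ih =>
      intro y hy
      refine ih y (nsmul_two_semiclosed ?_)
      rwa [← Nat.cast_smul_eq_nsmul ℝ, smul_smul, Nat.cast_ofNat, ← pow_succ']
  have hdyadic : ∀ k : ℕ, 0 ≤ ((⌊c * 2 ^ k⌋₊ : ℝ) / 2 ^ k) • x := fun k => by
    refine halve k _ ?_
    rw [smul_smul, mul_div_cancel₀ _ (by positivity), Nat.cast_smul_eq_nsmul]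
    exact nsmul_nonneg hx _
  have hlim : Tendsto (fun k : ℕ => ((⌊c * 2 ^ k⌋₊ : ℝ) / 2 ^ k) • x) atTop (𝓝 (c • x)) :=
    ((tendsto_nat_floor_mul_div_atTop hc).comp
      (tendsto_pow_atTop_atTop_of_one_lt one_lt_two)).smul_const x
  exact isClosed_Ici.mem_of_tendsto hlim (Eventually.of_forall hdyadic)

lemma convex_nonneg : Convex ℝ {x : E | 0 ≤ x} := fun _ hx _ hy _ _ ha hb _ =>
  add_nonneg (real_smul_nonneg ha hx) (real_smul_nonneg hb hy)

end NormedLattice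

section PositiveFunctional

variable {E : Type*} [NormedAddCommGroup E] [Lattice E] [IsOrderedAddMonoid E] [NormedSpace ℝ E]

lemma apply_mono_of_nonneg {g : E →L[ℝ] ℝ} (hg : ∀ x, 0 ≤ x → 0 ≤ g x) {a b : E} (hab : a ≤ b) :
    g a ≤ g b := by
  simpa using hg (b - a) (sub_nonneg.2 hab)

lemma abs_apply_le_apply_abs {g : E →L[ℝ] ℝ} (hg : ∀ x, 0 ≤ x → 0 ≤ g x) (z : E) :
    |g z| ≤ g |z| := by
  have hpos := hg _ (posPart_nonneg z)
  have hneg := hg _ (negPart_nonneg z)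
  have hz : g z = g z⁺ - g z⁻ := by rw [← map_sub, posPart_sub_negPart]
  rw [hz, ← posPart_add_negPart z, map_add]
  exact abs_le.2 ⟨by linarith, by linarith⟩

lemma exists_clm_eq_of_add_on_nonneg [HasSolidNorm E] (p : E → ℝ) (C : ℝ)
    (hadd : ∀ x y, 0 ≤ x → 0 ≤ y → p (x + y) = p x + p y)
    (hbdd : ∀ x, 0 ≤ x → |p x| ≤ C * ‖x‖) :
    ∃ F : E →L[ℝ] ℝ, ∀ x, 0 ≤ x → F x = p x := by
  have hp0 : p 0 = 0 := by simpa using hadd 0 0 le_rfl le_rfl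
  have hpos : ∀ a : E, a⁺ = a + a⁻ := fun a => eq_add_of_sub_eq (posPart_sub_negPart a)
  let F₀ : E →+ ℝ := AddMonoidHom.mk' (fun x => p x⁺ - p x⁻) fun x y => by
    have key := congrArg p
      (show (x + y)⁺ + (x⁻ + y⁻) = (x + y)⁻ + (x⁺ + y⁺) by rw [hpos (x + y), hpos x, hpos y]; abel)
    rw [hadd _ _ (posPart_nonneg _) (add_nonneg (negPart_nonneg _) (negPart_nonneg _)),
      hadd _ _ (negPart_nonneg _) (add_nonneg (posPart_nonneg _) (posPart_nonneg _)),
      hadd _ _ (negPart_nonneg _) (negPart_nonneg _),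
      hadd _ _ (posPart_nonneg _) (posPart_nonneg _)] at key
    linarith
  have hbound : ∀ z, ‖F₀ z‖ ≤ 2 * max C 0 * ‖z‖ := fun z => by
    have hC : ∀ x, 0 ≤ x → ‖x‖ ≤ ‖z‖ → |p x| ≤ max C 0 * ‖z‖ := fun x hx hxz =>
      (hbdd x hx).trans (mul_le_mul (le_max_left C 0) hxz (norm_nonneg x) (le_max_right C 0))
    calc ‖F₀ z‖ = |p z⁺ - p z⁻| := rfl
      _ ≤ |p z⁺| + |p z⁻| := abs_sub _ _
      _ ≤ 2 * max C 0 * ‖z‖ := by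
        linarith [hC _ (posPart_nonneg z) (norm_posPart_le z),
          hC _ (negPart_nonneg z) (norm_negPart_le z)]
  refine ⟨F₀.toRealLinearMap (AddMonoidHomClass.continuous_of_bound F₀ _ hbound), fun x hx => ?_⟩
  change p x⁺ - p x⁻ = p x
  rw [posPart_of_nonneg hx, negPart_of_nonneg hx, hp0, sub_zero]

end PositiveFunctional

section IdealCone

variable {α : Type*} [Lattice α] [AddCommGroup α] [IsOrderedAddMonoid α]

/-- The positive part `I₊` of an ideal `I`. -/
structure IsIdealCone (S : Set α) : Prop where
  zero_mem : (0 : α) ∈ S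
  nonneg : ∀ y ∈ S, 0 ≤ y
  mem_of_le : ∀ y ∈ S, ∀ z, 0 ≤ z → z ≤ y → z ∈ S
  add_mem : ∀ y ∈ S, ∀ z ∈ S, y + z ∈ S

lemma isIdealCone_nonneg : IsIdealCone {y : α | 0 ≤ y} :=
  ⟨le_rfl, fun _ hy => hy, fun _ _ _ hz _ => hz, fun _ hy _ hz => add_nonneg hy hz⟩

lemma isIdealCone_disjointComplement {T : Set α} (hT : ∀ t ∈ T, 0 ≤ t) :
    IsIdealCone {y | 0 ≤ y ∧ ∀ t ∈ T, y ⊓ t = 0} where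
  zero_mem := ⟨le_rfl, fun t ht => inf_eq_left.2 (hT t ht)⟩
  nonneg _ hy := hy.1
  mem_of_le y hy z hz hzy := ⟨hz, fun t ht =>
    le_antisymm ((inf_le_inf_right t hzy).trans_eq (hy.2 t ht)) (le_inf hz (hT t ht))⟩
  add_mem y hy z hz := ⟨add_nonneg hy.1 hz.1, fun t ht => le_antisymm
    ((inf_add_le_add_inf hy.1 hz.1 (hT t ht)).trans_eq (by rw [hy.2 t ht, hz.2 t ht, add_zero]))
    (le_inf (add_nonneg hy.1 hz.1) (hT t ht))⟩

end IdealCone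

section Component

variable {E : Type*} [NormedAddCommGroup E] [Lattice E] [NormedSpace ℝ E]

/-- The Riesz–Kantorovich formula for the component of `g` carried by the ideal of `S`. -/
def coneSup (g : E →L[ℝ] ℝ) (S : Set E) (x : E) : ℝ :=
  sSup (g '' {y | y ∈ S ∧ y ≤ x})

namespace IsIdealCone

variable {S : Set E} {g : E →L[ℝ] ℝ} {x y : E}

lemma coneSup_le (hS : IsIdealCone S) (hx : 0 ≤ x) {c : ℝ} (h : ∀ y ∈ S, y ≤ x → g y ≤ c) :
    coneSup g S x ≤ c :=
  csSup_le ⟨g 0, 0, ⟨hS.zero_mem, hx⟩, rfl⟩ (by rintro _ ⟨y, ⟨hyS, hyx⟩, rfl⟩; exact h y hyS hyx)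

variable [HasSolidNorm E] [IsOrderedAddMonoid E]

lemma apply_le_opNorm_mul (hS : IsIdealCone S) (hy : y ∈ S) (hyx : y ≤ x) : g y ≤ ‖g‖ * ‖x‖ :=
  (Real.le_norm_self _).trans ((g.le_opNorm y).trans
    (mul_le_mul_of_nonneg_left (norm_le_norm_of_nonneg_of_le (hS.nonneg y hy) hyx) (norm_nonneg g)))

lemma bddAbove_image (hS : IsIdealCone S) : BddAbove (g '' {y | y ∈ S ∧ y ≤ x}) :=
  ⟨‖g‖ * ‖x‖, by rintro _ ⟨y, ⟨hyS, hyx⟩, rfl⟩; exact hS.apply_le_opNorm_mul hyS hyx⟩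

lemma le_coneSup (hS : IsIdealCone S) (hy : y ∈ S) (hyx : y ≤ x) : g y ≤ coneSup g S x :=
  le_csSup hS.bddAbove_image ⟨y, ⟨hy, hyx⟩, rfl⟩

lemma coneSup_nonneg (hS : IsIdealCone S) (hx : 0 ≤ x) : 0 ≤ coneSup g S x := by
  simpa using hS.le_coneSup (g := g) hS.zero_mem hx

lemma coneSup_add (hS : IsIdealCone S) (hx : 0 ≤ x) (hy : 0 ≤ y) :
    coneSup g S (x + y) = coneSup g S x + coneSup g S y := by
  refine le_antisymm (hS.coneSup_le (add_nonneg hx hy) fun z hzS hzxy => ?_) ?_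
  · -- split `z = z ⊓ x + (z - x)⁺` with `(z - x)⁺ ≤ y`
    have hz0 := hS.nonneg z hzS
    have hzx : (z - x)⁺ ≤ z := by
      simpa [posPart_of_nonneg hz0] using posPart_mono (sub_le_self z hx)
    have hzy : (z - x)⁺ ≤ y := by
      simpa [posPart_of_nonneg hy] using posPart_mono (sub_le_sub_right hzxy x)
    rw [← inf_add_posPart_sub z x, map_add]
    exact add_le_add
      (hS.le_coneSup (hS.mem_of_le z hzS _ (le_inf hz0 hx) inf_le_left) inf_le_right)
      (hS.le_coneSup (hS.mem_of_le z hzS _ (posPart_nonneg _) hzx) hzy)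
  · rw [← le_sub_iff_add_le]
    refine hS.coneSup_le hx fun z₁ hz₁ hz₁x => ?_
    rw [le_sub_comm]
    refine hS.coneSup_le hy fun z₂ hz₂ hz₂y => ?_
    rw [le_sub_iff_add_le', ← map_add]
    exact hS.le_coneSup (hS.add_mem z₁ hz₁ z₂ hz₂) (add_le_add hz₁x hz₂y)

lemma abs_coneSup_le (hS : IsIdealCone S) (hx : 0 ≤ x) : |coneSup g S x| ≤ ‖g‖ * ‖x‖ := by
  rw [abs_of_nonneg (hS.coneSup_nonneg hx)]
  exact hS.coneSup_le hx fun y hy hyx => hS.apply_le_opNorm_mul hy hyx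

def component (hS : IsIdealCone S) (g : E →L[ℝ] ℝ) : E →L[ℝ] ℝ :=
  (exists_clm_eq_of_add_on_nonneg (coneSup g S) ‖g‖ (fun _ _ hx hy => hS.coneSup_add hx hy)
    fun _ hx => hS.abs_coneSup_le hx).choose

lemma component_apply (hS : IsIdealCone S) (hx : 0 ≤ x) : hS.component g x = coneSup g S x :=
  (exists_clm_eq_of_add_on_nonneg (coneSup g S) ‖g‖ (fun _ _ hx hy => hS.coneSup_add hx hy)
    fun _ hx => hS.abs_coneSup_le hx).choose_spec x hx

lemma le_component (hS : IsIdealCone S) (hy : y ∈ S) (hyx : y ≤ x) : g y ≤ hS.component g x := by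
  rw [hS.component_apply ((hS.nonneg y hy).trans hyx)]
  exact hS.le_coneSup hy hyx

lemma component_le (hS : IsIdealCone S) (hx : 0 ≤ x) {c : ℝ} (h : ∀ y ∈ S, y ≤ x → g y ≤ c) :
    hS.component g x ≤ c := by
  rw [hS.component_apply hx]
  exact hS.coneSup_le hx h

lemma component_nonneg (hS : IsIdealCone S) (hx : 0 ≤ x) : 0 ≤ hS.component g x := by
  simpa using hS.le_component (g := g) hS.zero_mem hx

lemma exists_lt_apply_add (hS : IsIdealCone S) (hx : 0 ≤ x) {δ : ℝ} (hδ : 0 < δ) :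
    ∃ y ∈ S, y ≤ x ∧ hS.component g x < g y + δ := by
  rw [hS.component_apply hx]
  obtain ⟨_, ⟨y, ⟨hyS, hyx⟩, rfl⟩, hy⟩ :=
    exists_lt_of_lt_csSup (s := g '' {y | y ∈ S ∧ y ≤ x}) ⟨g 0, 0, ⟨hS.zero_mem, hx⟩, rfl⟩
      (sub_lt_self (coneSup g S x) hδ)
  exact ⟨y, hyS, hyx, sub_lt_iff_lt_add.1 hy⟩

lemma component_mono_set {S' : Set E} (hS : IsIdealCone S) (hS' : IsIdealCone S') (h : S' ⊆ S)
    (hx : 0 ≤ x) : hS'.component g x ≤ hS.component g x :=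
  hS'.component_le hx fun _ hy hyx => hS.le_component (h hy) hyx

lemma component_le_apply (hS : IsIdealCone S) (hg : ∀ x, 0 ≤ x → 0 ≤ g x) (hx : 0 ≤ x) :
    hS.component g x ≤ g x :=
  hS.component_le hx fun _ _ hyx => apply_mono_of_nonneg hg hyx

lemma component_eq_of_mem (hS : IsIdealCone S) (hg : ∀ x, 0 ≤ x → 0 ≤ g x) (hy : y ∈ S) :
    hS.component g y = g y :=
  (hS.component_le_apply hg (hS.nonneg y hy)).antisymm (hS.le_component hy le_rfl)

end IsIdealCone

variable [HasSolidNorm E] [IsOrderedAddMonoid E]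

lemma exists_nonneg_clm_abs_apply_le (g : E →L[ℝ] ℝ) :
    ∃ φ : E →L[ℝ] ℝ, (∀ x, 0 ≤ x → 0 ≤ φ x) ∧ ∀ x, 0 ≤ x → |g x| ≤ φ x := by
  -- `φ = 2 g⁺ - g = |g|`, with `g⁺` the component of `g` on the whole positive cone
  set gpos := isIdealCone_nonneg.component g
  have hle : ∀ x : E, 0 ≤ x → g x ≤ gpos x := fun x hx => isIdealCone_nonneg.le_component hx le_rfl
  have hnn : ∀ x : E, 0 ≤ x → 0 ≤ gpos x := fun x hx => isIdealCone_nonneg.component_nonneg hx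
  refine ⟨gpos + gpos - g, fun x hx => ?_, fun x hx => abs_le.2 ⟨?_, ?_⟩⟩ <;>
    simp only [sub_apply, add_apply] <;>
    linarith [hle x hx, hnn x hx]

end Component

section OrderContinuousPart

lemma isGLB_range_inf_left {β ι : Type*} [Lattice β] [Zero β] {h : ι → β}
    (hglb : IsGLB (Set.range h) 0) {y : β} (hy : 0 ≤ y) : IsGLB (Set.range fun i => y ⊓ h i) 0 :=
  ⟨by rintro _ ⟨i, rfl⟩; exact le_inf hy (hglb.1 ⟨i, rfl⟩),
    fun _ hc => hglb.2 (by rintro _ ⟨i, rfl⟩; exact (hc ⟨i, rfl⟩).trans inf_le_right)⟩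

lemma NetTendstoZero.of_abs_le_add {D : DirectedType} {u v w : D.ι → ℝ}
    (hu : NetTendstoZero D u) (hv : NetTendstoZero D v) (h : ∀ i, |w i| ≤ |u i| + |v i|) :
    NetTendstoZero D w := by
  intro ε hε
  obtain ⟨i₁, hi₁⟩ := hu (ε / 2) (half_pos hε)
  obtain ⟨i₂, hi₂⟩ := hv (ε / 2) (half_pos hε)
  obtain ⟨i₀, h₁, h₂⟩ := D.directed i₁ i₂
  refine ⟨i₀, fun i hi => ?_⟩
  linarith [h i, hi₁ i (D.trans _ _ _ h₁ hi), hi₂ i (D.trans _ _ _ h₂ hi)]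

variable {E : Type*} [NormedAddCommGroup E] [Lattice E]

lemma OrderConvNet.of_abs_le {D : DirectedType} {f g : D.ι → E} (hg : OrderConvNet D g 0)
    (h : ∀ i, |f i| ≤ |g i|) : OrderConvNet D f 0 := by
  obtain ⟨D', e, hanti, hglb, hdom⟩ := hg
  refine ⟨D', e, hanti, hglb, fun γ => ?_⟩
  obtain ⟨i₀, hi₀⟩ := hdom γ
  exact ⟨i₀, fun i hi => by simpa using (h i).trans (by simpa using hi₀ i hi)⟩

lemma mem_orderContPart_of_abs_le {a b : E} (hb : b ∈ OrderContPart E) (hab : |a| ≤ |b|) :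
    a ∈ OrderContPart E :=
  fun D g hg hconv => hb D g (fun i => (hg i).trans hab) hconv

lemma zero_mem_orderContPart [HasSolidNorm E] : (0 : E) ∈ OrderContPart E := by
  intro D g hg _ ε hε
  obtain ⟨i⟩ := D.nonempty
  exact ⟨i, fun j _ => by
    rw [abs_norm]; exact (norm_le_norm_of_abs_le_abs (hg j)).trans_lt (by simpa using hε)⟩

variable [IsOrderedAddMonoid E]

lemma orderConvNet_of_antitone {D : DirectedType} {h : D.ι → E}
    (hanti : ∀ γ₁ γ₂, D.r γ₁ γ₂ → h γ₂ ≤ h γ₁) (hglb : IsGLB (Set.range h) 0) :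
    OrderConvNet D h 0 :=
  ⟨D, h, hanti, hglb, fun γ => ⟨γ, fun γ' hγ' => by
    rw [sub_zero, abs_of_nonneg (hglb.1 ⟨γ', rfl⟩)]; exact hanti _ _ hγ'⟩⟩

variable [HasSolidNorm E]

lemma add_mem_orderContPart {a b : E} (ha : a ∈ OrderContPart E) (hb : b ∈ OrderContPart E) :
    a + b ∈ OrderContPart E := by
  intro D g hg hconv
  have htrunc : ∀ c ∈ OrderContPart E, NetTendstoZero D fun i => ‖|g i| ⊓ |c|‖ := fun c hc =>
    hc D _
      (fun i => by rw [abs_of_nonneg (le_inf (abs_nonneg _) (abs_nonneg _))]; exact inf_le_right)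
      (hconv.of_abs_le fun i => by
        rw [abs_of_nonneg (le_inf (abs_nonneg _) (abs_nonneg _))]; exact inf_le_left)
  refine (htrunc a ha).of_abs_le_add (htrunc b hb) fun i => ?_
  have hsplit : |g i| ≤ |g i| ⊓ |a| + |g i| ⊓ |b| := by
    have := inf_add_le_add_inf (abs_nonneg a) (abs_nonneg b) (abs_nonneg (g i))
    rwa [inf_eq_right.2 ((hg i).trans (abs_add_le a b)), inf_comm |a|, inf_comm |b|] at this
  simp only [abs_norm]
  calc ‖g i‖ = ‖|g i|‖ := (norm_abs_eq_norm _).symm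
    _ ≤ ‖|g i| ⊓ |a| + |g i| ⊓ |b|‖ := norm_le_norm_of_nonneg_of_le (abs_nonneg _) hsplit
    _ ≤ _ := norm_add_le _ _

lemma isIdealCone_orderContPart : IsIdealCone {y : E | 0 ≤ y ∧ y ∈ OrderContPart E} where
  zero_mem := ⟨le_rfl, zero_mem_orderContPart⟩
  nonneg _ hy := hy.1
  mem_of_le _ hy _ hz hzy :=
    ⟨hz, mem_orderContPart_of_abs_le hy.2 (by rwa [abs_of_nonneg hz, abs_of_nonneg hy.1])⟩
  add_mem _ hy _ hz := ⟨add_nonneg hy.1 hz.1, add_mem_orderContPart hy.2 hz.2⟩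

variable [NormedSpace ℝ E]

lemma IsIdealCone.inOCDual_component {S : Set E} (hS : IsIdealCone S)
    (hSa : ∀ y ∈ S, y ∈ OrderContPart E) {φ : E →L[ℝ] ℝ} (hφ : ∀ x, 0 ≤ x → 0 ≤ φ x) :
    InOCDual (hS.component φ) := by
  set F := hS.component φ
  have hF : ∀ x, 0 ≤ x → 0 ≤ F x := fun x hx => hS.component_nonneg hx
  rintro D f ⟨D', h, hanti, hglb, hdom⟩
  have hh0 : ∀ γ, 0 ≤ h γ := fun γ => hglb.1 ⟨γ, rfl⟩
  suffices hsmall : ∀ δ > 0, ∃ γ, F (h γ) < δ by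
    intro ε hε
    obtain ⟨γ, hγ⟩ := hsmall ε hε
    obtain ⟨i₀, hi₀⟩ := hdom γ
    exact ⟨i₀, fun i hi => (abs_apply_le_apply_abs hF (f i)).trans_lt
      ((apply_mono_of_nonneg hF (by simpa using hi₀ i hi)).trans_lt hγ)⟩
  intro δ hδ
  obtain ⟨γ₀⟩ := D'.nonempty
  -- `F (h γ₀)` is nearly attained at some `y ∈ S`; past `γ₀`, `F (h γ)` exceeds `φ (y ⊓ h γ)` by
  -- less than that defect, and `‖y ⊓ h γ‖ → 0` because `y` is an order continuous element.
  obtain ⟨y, hyS, hyh, hy⟩ := hS.exists_lt_apply_add (g := φ) (hh0 γ₀) (half_pos hδ)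
  have hy0 := hS.nonneg y hyS
  have hnull : NetTendstoZero D' fun γ => ‖y ⊓ h γ‖ :=
    hSa y hyS D' _
      (fun γ => by rw [abs_of_nonneg (le_inf hy0 (hh0 γ)), abs_of_nonneg hy0]; exact inf_le_left)
      (orderConvNet_of_antitone (fun _ _ hr => inf_le_inf_left y (hanti _ _ hr))
        (isGLB_range_inf_left hglb hy0))
  obtain ⟨γ₁, hγ₁⟩ := hnull (δ / 2 / (‖φ‖ + 1)) (by positivity)
  obtain ⟨γ, h₀, h₁⟩ := D'.directed γ₀ γ₁
  have hinf : F (h γ ⊓ y) < δ / 2 := by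
    have hn : (‖φ‖ + 1) * ‖y ⊓ h γ‖ < δ / 2 := by
      rw [← lt_div_iff₀' (by positivity), ← abs_norm]; exact hγ₁ γ h₁
    calc F (h γ ⊓ y) ≤ φ (y ⊓ h γ) := by
          rw [inf_comm]; exact hS.component_le_apply hφ (le_inf hy0 (hh0 γ))
      _ ≤ ‖φ‖ * ‖y ⊓ h γ‖ := (Real.le_norm_self _).trans (φ.le_opNorm _)
      _ < δ / 2 := by nlinarith [norm_nonneg (y ⊓ h γ)]
  have hpos : F (h γ - y)⁺ < δ / 2 := calc
    F (h γ - y)⁺ ≤ F (h γ₀ - y)⁺ :=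
      apply_mono_of_nonneg hF (posPart_mono (sub_le_sub_right (hanti _ _ h₀) y))
    _ = F (h γ₀) - φ y := by
      rw [posPart_of_nonneg (sub_nonneg.2 hyh), map_sub, hS.component_eq_of_mem hφ hyS]
    _ < δ / 2 := by linarith
  refine ⟨γ, ?_⟩
  rw [← inf_add_posPart_sub (h γ) y, map_add]
  linarith

lemma apply_le_component_add_norm_mul {φ : E →L[ℝ] ℝ} (hφ : ∀ x, 0 ≤ x → 0 ≤ φ x) {v y : E}
    (hv : 0 ≤ v) (hvy : v - y ∈ OrderContPart E) :
    φ v ≤ isIdealCone_orderContPart.component φ v + ‖φ‖ * ‖y‖ := by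
  -- `v = v ⊓ |y| + (v - |y|)⁺`, where `(v - |y|)⁺ ≤ |v - y|` is order continuous
  have hS := isIdealCone_orderContPart (E := E)
  have hw : (v - |y|)⁺ ∈ {z : E | 0 ≤ z ∧ z ∈ OrderContPart E} :=
    ⟨posPart_nonneg _, mem_orderContPart_of_abs_le hvy <| by
      rw [abs_of_nonneg (posPart_nonneg _)]
      exact (posPart_mono (sub_le_sub_left (le_abs_self y) v)).trans (posPart_le_abs _)⟩
  have hwv : (v - |y|)⁺ ≤ v := by
    simpa [posPart_of_nonneg hv] using posPart_mono (sub_le_self v (abs_nonneg y))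
  have hinf : φ (v ⊓ |y|) ≤ ‖φ‖ * ‖y‖ := (Real.le_norm_self _).trans <| (φ.le_opNorm _).trans <| by
    gcongr
    rw [← norm_abs_eq_norm y]
    exact norm_le_norm_of_nonneg_of_le (le_inf hv (abs_nonneg y)) inf_le_right
  calc φ v = φ (v ⊓ |y|) + hS.component φ (v - |y|)⁺ := by
        rw [hS.component_eq_of_mem hφ hw, ← map_add, inf_add_posPart_sub]
    _ ≤ ‖φ‖ * ‖y‖ + hS.component φ v :=
        add_le_add hinf (apply_mono_of_nonneg (fun _ hx => hS.component_nonneg hx) hwv)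
    _ = _ := add_comm _ _

end OrderContinuousPart

section DisjointSequences

def DirectedType.ofSemilatticeSup (ι : Type) [SemilatticeSup ι] [Nonempty ι] : DirectedType where
  ι := ι
  r := (· ≤ ·)
  nonempty := ‹_›
  refl := le_refl
  trans _ _ _ := le_trans
  directed a b := ⟨a ⊔ b, le_sup_left, le_sup_right⟩

variable {E : Type*} [NormedAddCommGroup E] [Lattice E] [NormedSpace ℝ E]

lemma DualOrderContinuous.tendsto_norm_sub {ι : Type} [SemilatticeSup ι] [Nonempty ι]
    (hE : DualOrderContinuous E) {F : ι → E →L[ℝ] ℝ} (hFanti : ∀ i j, i ≤ j → dualLE (F j) (F i))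
    {Ψ : E →L[ℝ] ℝ} (hΨ : ∀ x, 0 ≤ x → IsGLB (Set.range fun i => F i x) (Ψ x)) :
    NetTendstoZero (DirectedType.ofSemilatticeSup ι) fun i => ‖F i - Ψ‖ := by
  refine hE (DirectedType.ofSemilatticeSup ι) (fun i => F i - Ψ) (fun _ => trivial)
    (fun i j hij x hx => ?_) (fun i x hx => ?_)
    fun h _ hh x hx => ?_
  · simp only [sub_apply]; linarith [hFanti i j hij x hx]
  · simp only [sub_apply, zero_apply]; linarith [(hΨ x hx).1 ⟨i, rfl⟩]
  · have : h x + Ψ x ≤ Ψ x := (hΨ x hx).2 <| by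
      rintro _ ⟨i, rfl⟩
      have := hh i x hx
      simp only [sub_apply] at this
      linarith
    simp only [zero_apply]; linarith

variable [HasSolidNorm E] [IsOrderedAddMonoid E]

lemma exists_clm_isGLB {ι : Type*} [SemilatticeSup ι] [Nonempty ι] (F : ι → E →L[ℝ] ℝ)
    (hF0 : ∀ i x, 0 ≤ x → 0 ≤ F i x) (hFanti : ∀ i j, i ≤ j → dualLE (F j) (F i)) :
    ∃ Ψ : E →L[ℝ] ℝ, ∀ x, 0 ≤ x → IsGLB (Set.range fun i => F i x) (Ψ x) := by
  have hbdd : ∀ x : E, 0 ≤ x → BddBelow (Set.range fun i => F i x) := fun x hx =>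
    ⟨0, by rintro _ ⟨i, rfl⟩; exact hF0 i x hx⟩
  obtain ⟨i₀⟩ := ‹Nonempty ι›
  obtain ⟨Ψ, hΨ⟩ := exists_clm_eq_of_add_on_nonneg (fun x => ⨅ i, F i x) ‖F i₀‖
    (fun x y hx hy => le_antisymm
      (le_ciInf_add_ciInf fun i j => (ciInf_le (hbdd _ (add_nonneg hx hy)) (i ⊔ j)).trans <| by
        rw [map_add]
        exact add_le_add (hFanti _ _ le_sup_left x hx) (hFanti _ _ le_sup_right y hy))
      (le_ciInf fun i => by
        rw [map_add]; exact add_le_add (ciInf_le (hbdd x hx) i) (ciInf_le (hbdd y hy) i)))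
    fun x hx => by
      rw [abs_of_nonneg (le_ciInf fun i => hF0 i x hx)]
      exact (ciInf_le (hbdd x hx) i₀).trans ((Real.le_norm_self _).trans ((F i₀).le_opNorm x))
  exact ⟨Ψ, fun x hx => hΨ x hx ▸ isGLB_ciInf (hbdd x hx)⟩

lemma DualOrderContinuous.tendsto_apply_of_disjoint (hE : DualOrderContinuous E) {e : ℕ → E}
    (he0 : ∀ n, 0 ≤ e n) {M : ℝ} (hM : ∀ n, ‖e n‖ ≤ M) (hdisj : ∀ n m, n ≠ m → e n ⊓ e m = 0)
    {P : E →L[ℝ] ℝ} (hP : ∀ x, 0 ≤ x → 0 ≤ P x) : Tendsto (fun n => P (e n)) atTop (𝓝 0) := by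
  -- `F A` is the component of `P` on the disjoint complement of `{e k | k ∈ A}`. These decrease to
  -- some `Ψ` vanishing at every `e n`, while `F A` agrees with `P` at `e n` for `n ∉ A`.
  have hS : ∀ A : Finset ℕ, IsIdealCone {y | 0 ≤ y ∧ ∀ t ∈ e '' A, y ⊓ t = 0} := fun A =>
    isIdealCone_disjointComplement (by rintro _ ⟨n, -, rfl⟩; exact he0 n)
  set F := fun A => (hS A).component P
  have hFanti : ∀ A B : Finset ℕ, A ≤ B → dualLE (F B) (F A) := fun A B hAB x hx =>
    (hS A).component_mono_set (hS B)
      (fun y hy => ⟨hy.1, fun t ht => hy.2 t (Set.image_mono hAB ht)⟩) hx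
  obtain ⟨Ψ, hΨ⟩ := exists_clm_isGLB F (fun A x hx => (hS A).component_nonneg hx) hFanti
  have hΨe : ∀ n, Ψ (e n) ≤ 0 := fun n => ((hΨ _ (he0 n)).1 ⟨{n}, rfl⟩).trans <|
    (hS {n}).component_le (he0 n) fun y hy hyn => by
      rw [← inf_eq_left.2 hyn, hy.2 (e n) ⟨n, Finset.mem_singleton_self n, rfl⟩, map_zero]
  have hFe : ∀ (A : Finset ℕ) n, n ∉ A → F A (e n) = P (e n) := fun A n hn =>
    (hS A).component_eq_of_mem hP
      ⟨he0 n, by rintro _ ⟨k, hk, rfl⟩; exact hdisj n k fun h => hn (h ▸ hk)⟩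
  have hM0 : 0 ≤ M := (norm_nonneg _).trans (hM 0)
  refine tendsto_order.2 ⟨fun a ha => Eventually.of_forall fun n => ha.trans_le (hP _ (he0 n)),
    fun ε hε => ?_⟩
  obtain ⟨A, hA⟩ := hE.tendsto_norm_sub hFanti hΨ (ε / (M + 1)) (by positivity)
  have hA' : ‖F A - Ψ‖ * (M + 1) < ε := by
    rw [← lt_div_iff₀ (by positivity), ← abs_norm]; exact hA A le_rfl
  filter_upwards [Nat.cofinite_eq_atTop ▸ A.eventually_cofinite_notMem] with n hn
  calc P (e n) ≤ (F A - Ψ) (e n) := by rw [sub_apply, hFe A n hn]; linarith [hΨe n]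
    _ ≤ ‖F A - Ψ‖ * ‖e n‖ := (Real.le_norm_self _).trans ((F A - Ψ).le_opNorm _)
    _ ≤ ‖F A - Ψ‖ * (M + 1) := by gcongr; linarith [hM n]
    _ < ε := hA'

lemma DualOrderContinuous.weaklyNull_of_disjoint (hE : DualOrderContinuous E) {e : ℕ → E}
    (he0 : ∀ n, 0 ≤ e n) (hbdd : ∃ M, ∀ n, ‖e n‖ ≤ M) (hdisj : ∀ n m, n ≠ m → e n ⊓ e m = 0) :
    WeaklyNull e := by
  obtain ⟨M, hM⟩ := hbdd
  intro ρ
  obtain ⟨P, hP0, hρP⟩ := exists_nonneg_clm_abs_apply_le ρ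
  exact squeeze_zero_norm (fun n => hρP _ (he0 n)) (hE.tendsto_apply_of_disjoint he0 hM hdisj hP0)

end DisjointSequences

section Quotient

lemma zero_mem_closure_convexHull_of_tendsto {F : Type*} [NormedAddCommGroup F] [NormedSpace ℝ F]
    {x : ℕ → F} (hx : ∀ ρ : F →L[ℝ] ℝ, Tendsto (fun n => ρ (x n)) atTop (𝓝 0)) {T : Set ℕ}
    (hT : ∃ᶠ n in atTop, n ∈ T) : (0 : F) ∈ closure (convexHull ℝ (x '' T)) := by
  by_contra h0
  obtain ⟨ρ, u, hρ, hu⟩ :=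
    geometric_hahn_banach_closed_point (convex_convexHull ℝ _).closure isClosed_closure h0
  rw [map_zero] at hu
  obtain ⟨n, hnT, hn⟩ := (hT.and_eventually ((hx ρ).eventually (lt_mem_nhds hu))).exists
  exact (hρ _ (subset_closure (subset_convexHull ℝ _ ⟨n, hnT, rfl⟩))).not_gt hn

lemma map_nonneg_of_map_sup {X Q F : Type*} [Lattice X] [AddCommGroup X] [Lattice Q]
    [AddCommGroup Q] [FunLike F X Q] [AddMonoidHomClass F X Q] {q : F}
    (hq : ∀ x y, q (x ⊔ y) = q x ⊔ q y) {x : X} (hx : 0 ≤ x) : 0 ≤ q x := by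
  simpa [sup_eq_left.2 hx] using hq x 0

lemma map_inf_of_map_sup {X Q F : Type*} [Lattice X] [AddCommGroup X] [IsOrderedAddMonoid X]
    [Lattice Q] [AddCommGroup Q] [IsOrderedAddMonoid Q] [FunLike F X Q] [AddMonoidHomClass F X Q]
    {q : F} (hq : ∀ x y, q (x ⊔ y) = q x ⊔ q y) (x y : X) : q (x ⊓ y) = q x ⊓ q y := by
  have h := congrArg q (inf_add_sup x y)
  rw [map_add, map_add, hq, ← inf_add_sup (q x) (q y)] at h
  exact add_right_cancel h

section QuotientNorm

variable {X Q : Type*} [NormedAddCommGroup X] [NormedAddCommGroup Q] {q : X → Q}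

lemma norm_map_le_of_quotientNorm (hnorm : ∀ x, ‖q x‖ = sInf {c : ℝ | ∃ y, q y = q x ∧ c = ‖y‖})
    (x : X) : ‖q x‖ ≤ ‖x‖ :=
  (hnorm x).trans_le (csInf_le ⟨0, by rintro _ ⟨y, -, rfl⟩; exact norm_nonneg y⟩ ⟨x, rfl, rfl⟩)

lemma le_add_mul_norm_map_of_quotientNorm
    (hnorm : ∀ x, ‖q x‖ = sInf {c : ℝ | ∃ y, q y = q x ∧ c = ‖y‖}) {x : X} {a b C : ℝ}
    (hC : 0 ≤ C) (h : ∀ y, q y = q x → a ≤ b + C * ‖y‖) : a ≤ b + C * ‖q x‖ := by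
  refine le_of_forall_pos_lt_add fun ε hε => ?_
  have hδ : C * (ε / (C + 1)) < ε := by
    rw [mul_div_assoc', div_lt_iff₀ (by positivity)]; nlinarith
  obtain ⟨_, ⟨y, hy, rfl⟩, hlt⟩ :=
    exists_lt_of_csInf_lt (s := {c : ℝ | ∃ y, q y = q x ∧ c = ‖y‖}) (b := ‖q x‖ + ε / (C + 1))
      ⟨_, x, rfl, rfl⟩ (by rw [← hnorm x]; exact lt_add_of_pos_right _ (by positivity))
  calc a ≤ b + C * ‖y‖ := h y hy
    _ ≤ b + C * (‖q x‖ + ε / (C + 1)) := by gcongr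
    _ < b + C * ‖q x‖ + ε := by linarith

end QuotientNorm

lemma tendsto_of_le_add_mul_norm_map {E Q : Type*} [NormedAddCommGroup E] [Lattice E]
    [HasSolidNorm E] [IsOrderedAddMonoid E] [NormedSpace ℝ E] [NormedAddCommGroup Q]
    [NormedSpace ℝ Q] {f : ℕ → E} (hf0 : ∀ n, 0 ≤ f n) {φ ψ : E →L[ℝ] ℝ}
    (hφ : ∀ x, 0 ≤ x → 0 ≤ φ x) (q : E →ₗ[ℝ] Q) {C : ℝ} (hC : 0 ≤ C)
    (hsplit : ∀ v, 0 ≤ v → φ v ≤ ψ v + C * ‖q v‖) (hψ : Tendsto (fun n => ψ (f n)) atTop (𝓝 0))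
    (hq : ∀ ρ : Q →L[ℝ] ℝ, Tendsto (fun n => ρ (q (f n))) atTop (𝓝 0)) :
    Tendsto (fun n => φ (f n)) atTop (𝓝 0) := by
  refine tendsto_order.2 ⟨fun a ha => Eventually.of_forall fun n => ha.trans_le (hφ _ (hf0 n)),
    fun ε hε => ?_⟩
  by_contra hfreq
  -- Convex combinations `v` of the `f n` with `φ (f n) ≥ ε` and `ψ (f n) ≤ ε / 2` have
  -- `φ v ≥ ε` and `ψ v ≤ ε / 2`, yet `‖q v‖` can be made arbitrarily small.
  set T := {n | ε ≤ φ (f n) ∧ ψ (f n) ≤ ε / 2}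
  have hT : ∃ᶠ n in atTop, n ∈ T :=
    ((not_eventually.1 hfreq).mono fun _ hn => not_lt.1 hn).and_eventually
      (hψ.eventually (ge_mem_nhds (half_pos hε)))
  have h0 := zero_mem_closure_convexHull_of_tendsto hq hT
  rw [← Set.image_image q f, ← q.image_convexHull] at h0
  obtain ⟨_, ⟨v, hv, rfl⟩, hqv⟩ := Metric.mem_closure_iff.1 h0 (ε / 2 / (C + 1)) (by positivity)
  have hK : convexHull ℝ (f '' T) ⊆ {v | 0 ≤ v} ∩ {v | ε ≤ φ v} ∩ {v | ψ v ≤ ε / 2} :=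
    convexHull_min (by rintro _ ⟨n, hn, rfl⟩; exact ⟨⟨hf0 n, hn.1⟩, hn.2⟩)
      ((convex_nonneg.inter (convex_halfSpace_ge φ.isLinear ε)).inter
        (convex_halfSpace_le ψ.isLinear (ε / 2)))
  obtain ⟨⟨hv0, hφv⟩, hψv⟩ : (0 ≤ v ∧ ε ≤ φ v) ∧ ψ v ≤ ε / 2 := hK hv
  rw [dist_zero_left, lt_div_iff₀ (by positivity)] at hqv
  nlinarith [hsplit v hv0, norm_nonneg (q v)]

end Quotient

theorem stmt9_general {X Q : Type*}
    [NormedAddCommGroup X] [Lattice X] [HasSolidNorm X] [IsOrderedAddMonoid X]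
    [NormedSpace ℝ X]
    [NormedAddCommGroup Q] [Lattice Q] [HasSolidNorm Q] [IsOrderedAddMonoid Q]
    [NormedSpace ℝ Q]
    (q : X →ₗ[ℝ] Q)
    (hlat : ∀ x y : X, q (x ⊔ y) = q x ⊔ q y)
    (hker : ∀ x : X, q x = 0 ↔ x ∈ OrderContPart X)
    (hnorm : ∀ x : X, ‖q x‖ = sInf {c : ℝ | ∃ y : X, q y = q x ∧ c = ‖y‖})
    (hQ : DualOrderContinuous Q) :
    DOCP X := by
  intro f hf0 ⟨M, hM⟩ hfdisj hσ g
  have hqf : WeaklyNull fun n => q (f n) :=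
    hQ.weaklyNull_of_disjoint (fun n => map_nonneg_of_map_sup hlat (hf0 n))
      ⟨M, fun n => (norm_map_le_of_quotientNorm hnorm (f n)).trans (hM n)⟩
      fun n m hnm => by rw [← map_inf_of_map_sup hlat, hfdisj n m hnm, map_zero]
  obtain ⟨φ, hφ0, hgφ⟩ := exists_nonneg_clm_abs_apply_le g
  have hS := isIdealCone_orderContPart (E := X)
  have hsplit : ∀ v, 0 ≤ v → φ v ≤ hS.component φ v + ‖φ‖ * ‖q v‖ := fun v hv =>
    le_add_mul_norm_map_of_quotientNorm hnorm (norm_nonneg φ) fun y hy =>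
      apply_le_component_add_norm_mul hφ0 hv ((hker _).1 (by rw [map_sub, hy, sub_self]))
  have hφa := hσ _ (hS.inOCDual_component (fun _ hy => hy.2) hφ0)
  exact squeeze_zero_norm (fun n => hgφ _ (hf0 n))
    (tendsto_of_le_add_mul_norm_map hf0 hφ0 q (norm_nonneg φ) hsplit hφa hqf)

/-- if the quotient `X / X_a` (realized as a Banach lattice `Q` with
quotient lattice homomorphism `q` whose kernel is `X_a` and whose norm is the
quotient norm) has order continuous dual, then `X` has `DOCP`. -/
theorem stmt9 {X Q : Type*}
    [NormedAddCommGroup X] [Lattice X] [HasSolidNorm X] [IsOrderedAddMonoid X]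
    [NormedSpace ℝ X] [CompleteSpace X]
    [NormedAddCommGroup Q] [Lattice Q] [HasSolidNorm Q] [IsOrderedAddMonoid Q]
    [NormedSpace ℝ Q] [CompleteSpace Q]
    (q : X →ₗ[ℝ] Q)
    (hlat : ∀ x y : X, q (x ⊔ y) = q x ⊔ q y)
    (hker : ∀ x : X, q x = 0 ↔ x ∈ OrderContPart X)
    (hsurj : Function.Surjective q)
    (hnorm : ∀ x : X, ‖q x‖ = sInf {c : ℝ | ∃ y : X, q y = q x ∧ c = ‖y‖})
    (hQ : DualOrderContinuous Q) :
    DOCP X :=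
  stmt9_general q hlat hker hnorm hQ
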